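/- The pushforward and pullback of piecewise polynomial functions along a proper morphism of regular fans satisfy the projection formula: π_*(π^*(x) · y) = x · π_*(y) for all x ∈ PP^*(Σ) and y ∈ PP^*(Σ'). In particular π_*(π^*(x)) = x · π_*(1). -/

import Mathlib

open scoped BigOperators

namespace PPArakelov

/-- Evaluation of a rational-coefficient multivariate polynomial at a real point. -/
noncomputable def evalR {m : ℕ} (p : MvPolynomial (Fin m) ℚ) (x : Fin m → ℝ) : ℝ :=
  MvPolynomial.eval x (MvPolynomial.map (algebraMap ℚ ℝ) p)

/-- Realization of an integral vector in `N_ℝ`. -/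
def ι {m : ℕ} (v : Fin m → ℤ) : Fin m → ℝ := fun i => (v i : ℝ)

/-- Realization of a rational vector in `N_ℝ`. -/
def ιQ {m : ℕ} (v : Fin m → ℚ) : Fin m → ℝ := fun i => (v i : ℝ)

/-- The convex cone generated by a finite set of vectors. -/
def coneOf {m : ℕ} (s : Finset (Fin m → ℝ)) : Set (Fin m → ℝ) :=
  { x | ∃ c : (Fin m → ℝ) → ℝ, (∀ v, 0 ≤ c v) ∧ x = ∑ v ∈ s, c v • v }

/-- A rational polyhedral cone: one generated by finitely many lattice vectors. -/
def IsRatCone {m : ℕ} (σ : Set (Fin m → ℝ)) : Prop :=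
  ∃ s : Finset (Fin m → ℤ), σ = coneOf (s.image ι)

/-- `τ` is a face of the cone `σ`. -/
def IsFaceOfCone {m : ℕ} (τ σ : Set (Fin m → ℝ)) : Prop :=
  ∃ u : (Fin m → ℝ) →ₗ[ℝ] ℝ, (∀ x ∈ σ, 0 ≤ u x) ∧ τ = {x ∈ σ | u x = 0}

/-- A rational polyhedral fan in `N_ℝ = ℝ^m`. -/
structure Fan (m : ℕ) where
  cones : Set (Set (Fin m → ℝ))
  finite : cones.Finite
  rat : ∀ σ ∈ cones, IsRatCone σ
  face_mem : ∀ σ ∈ cones, ∀ τ, IsFaceOfCone τ σ → τ ∈ cones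
  inter_face : ∀ σ ∈ cones, ∀ σ' ∈ cones,
    IsFaceOfCone (σ ∩ σ') σ ∧ IsFaceOfCone (σ ∩ σ') σ'

/-- The support `|Σ|` of a fan. -/
def Fan.supp {m : ℕ} (F : Fan m) : Set (Fin m → ℝ) := ⋃₀ F.cones

/-- A piecewise polynomial function on a fan (ambient version): on each cone it is
given by a polynomial with rational coefficients. -/
def PPfun {m : ℕ} (F : Fan m) (f : (Fin m → ℝ) → ℝ) : Prop :=
  ∀ σ ∈ F.cones, ∃ p : MvPolynomial (Fin m) ℚ, ∀ x ∈ σ, f x = evalR p x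

/-- A piecewise polynomial function defined on the support `|Σ|` of a fan. -/
def PPfunOn {m : ℕ} (F : Fan m) (f : ↥F.supp → ℝ) : Prop :=
  ∀ σ (hσ : σ ∈ F.cones), ∃ p : MvPolynomial (Fin m) ℚ,
    ∀ x (hx : x ∈ σ), f ⟨x, Set.mem_sUnion.mpr ⟨σ, hσ, hx⟩⟩ = evalR p x

/-- A homogeneous piecewise polynomial function of degree `k` on a fan. -/
def PPHomog {m : ℕ} (F : Fan m) (k : ℕ) (f : (Fin m → ℝ) → ℝ) : Prop :=
  ∀ σ ∈ F.cones, ∃ p : MvPolynomial (Fin m) ℚ, p.IsHomogeneous k ∧ ∀ x ∈ σ, f x = evalR p x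

/-- A piecewise linear function on a fan. -/
def IsPWLinear {m : ℕ} (F : Fan m) (f : (Fin m → ℝ) → ℝ) : Prop :=
  ∀ σ ∈ F.cones, ∃ ℓ : (Fin m → ℝ) →ₗ[ℝ] ℝ, ∀ x ∈ σ, f x = ℓ x

/-- A regular (smooth) fan: every cone is generated by part of a basis of the lattice. -/
def Fan.IsRegular {m : ℕ} (F : Fan m) : Prop :=
  ∀ σ ∈ F.cones, ∃ (b : Module.Basis (Fin m) ℤ (Fin m → ℤ)) (s : Finset (Fin m)),
    σ = coneOf (s.image fun j => ι (b j))

/-- A compatible tuple `(f_σ)_{σ ∈ Σ}` of polynomial functions on the cones of a fan: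
`f_τ = f_σ|_τ` whenever `τ` is a face of `σ`. -/
def CompatTuple {m : ℕ} (F : Fan m) (t : ∀ σ : F.cones, ↥(σ : Set (Fin m → ℝ)) → ℝ) : Prop :=
  (∀ σ : F.cones, ∃ p : MvPolynomial (Fin m) ℚ,
      ∀ x : ↥(σ : Set (Fin m → ℝ)), t σ x = evalR p (x : Fin m → ℝ)) ∧
  ∀ σ τ : F.cones, IsFaceOfCone (τ : Set (Fin m → ℝ)) (σ : Set (Fin m → ℝ)) →
    ∀ x (hx : x ∈ (τ : Set (Fin m → ℝ))) (hx' : x ∈ (σ : Set (Fin m → ℝ))),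
      t τ ⟨x, hx⟩ = t σ ⟨x, hx'⟩

/-- A rational polyhedron: convex hull of finitely many rational points plus a rational cone. -/
def polyhedronOf {m : ℕ} (V R : Finset (Fin m → ℚ)) : Set (Fin m → ℝ) :=
  { x | ∃ a c : (Fin m → ℚ) → ℝ,
      (∀ p, 0 ≤ a p) ∧ (∑ p ∈ V, a p = 1) ∧ (∀ v, 0 ≤ c v) ∧
      x = (∑ p ∈ V, a p • ιQ p) + ∑ v ∈ R, c v • ιQ v }

def IsRatPolyhedron {m : ℕ} (P : Set (Fin m → ℝ)) : Prop :=
  ∃ V R : Finset (Fin m → ℚ), V.Nonempty ∧ P = polyhedronOf V R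

/-- `Q` is a face of the polyhedron `P`. -/
def IsFaceOfPoly {m : ℕ} (Q P : Set (Fin m → ℝ)) : Prop :=
  ∃ (u : (Fin m → ℝ) →ₗ[ℝ] ℝ) (r : ℝ), (∀ x ∈ P, r ≤ u x) ∧ Q = {x ∈ P | u x = r}

/-- A (strongly convex) rational polyhedral complex in `N_ℝ = ℝ^m`. -/
structure PolyComplex (m : ℕ) where
  polys : Set (Set (Fin m → ℝ))
  finite : polys.Finite
  rat : ∀ P ∈ polys, IsRatPolyhedron P
  face_mem : ∀ P ∈ polys, ∀ Q, IsFaceOfPoly Q P → Q.Nonempty → Q ∈ polys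
  inter_face : ∀ P ∈ polys, ∀ P' ∈ polys, (P ∩ P').Nonempty →
    IsFaceOfPoly (P ∩ P') P ∧ IsFaceOfPoly (P ∩ P') P'

/-- A complete polyhedral complex covers all of `N_ℝ`. -/
def PolyComplex.IsComplete {m : ℕ} (C : PolyComplex m) : Prop := ⋃₀ C.polys = Set.univ

/-- The vertices `Π(0)` of a polyhedral complex. -/
def PolyComplex.vtx {m : ℕ} (C : PolyComplex m) : Set (Fin m → ℝ) :=
  {v | ({v} : Set (Fin m → ℝ)) ∈ C.polys}

/-- The cone of a polyhedron `P` at a point `v` (the cone of `P` in the star fan `Π(v)`). -/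
def coneAt {m : ℕ} (v : Fin m → ℝ) (P : Set (Fin m → ℝ)) : Set (Fin m → ℝ) :=
  {y | ∃ c : ℝ, 0 ≤ c ∧ ∃ x ∈ P, y = c • (x - v)}

/-- A piecewise polynomial function of degree `≤ k` on the star fan `Π(v)` at a vertex `v`. -/
def StarPP {m : ℕ} (C : PolyComplex m) (v : Fin m → ℝ) (k : ℕ)
    (f : (Fin m → ℝ) → ℝ) : Prop :=
  ∀ P ∈ C.polys, v ∈ P → ∃ p : MvPolynomial (Fin m) ℚ, p.totalDegree ≤ k ∧
    ∀ y ∈ coneAt v P, f y = evalR p y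

/-- A full-dimensional subset of `ℝ^m`. -/
def FullDim {m : ℕ} (P : Set (Fin m → ℝ)) : Prop := (interior P).Nonempty

/-- An affine piecewise polynomial function of degree `k` on a polyhedral complex:
a tuple `(f_v)` of piecewise polynomial functions on the star fans `Π(v)` such that on
every full-dimensional polyhedron `Λ` with vertices `v, v'`, the representing polynomials
agree: `f_{v,Λ} = f_{v',Λ}` as polynomial functions on `N_ℝ`. -/
def AffinePP {m : ℕ} (C : PolyComplex m) (k : ℕ)
    (f : (Fin m → ℝ) → ((Fin m → ℝ) → ℝ)) : Prop :=
  (∀ v ∈ C.vtx, StarPP C v k (f v)) ∧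
  ∀ Λ ∈ C.polys, FullDim Λ → ∀ v ∈ C.vtx, v ∈ Λ → ∀ v' ∈ C.vtx, v' ∈ Λ →
    ∀ p p' : MvPolynomial (Fin m) ℚ,
      p.totalDegree ≤ k → (∀ y ∈ coneAt v Λ, f v y = evalR p y) →
      p'.totalDegree ≤ k → (∀ y ∈ coneAt v' Λ, f v' y = evalR p' y) →
      ∀ x : Fin m → ℝ, evalR p (x - v) = evalR p' (x - v')

/-- `y` lies in the support of the star fan of `v`. -/
def InStar {m : ℕ} (C : PolyComplex m) (v y : Fin m → ℝ) : Prop :=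
  ∃ P ∈ C.polys, v ∈ P ∧ y ∈ coneAt v P

/-- A piecewise affine function with respect to the complex `C` (rational coefficients). -/
def IsPA {m : ℕ} (C : PolyComplex m) (g : (Fin m → ℝ) → ℝ) : Prop :=
  Continuous g ∧ ∀ Λ ∈ C.polys, ∃ p : MvPolynomial (Fin m) ℚ, p.totalDegree ≤ 1 ∧
    ∀ x ∈ Λ, g x = evalR p x

/-- The tuple `f = (f_v)` induces the global function `g`. -/
def Induces {m : ℕ} (C : PolyComplex m) (f : (Fin m → ℝ) → ((Fin m → ℝ) → ℝ))
    (g : (Fin m → ℝ) → ℝ) : Prop :=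
  ∀ v ∈ C.vtx, ∀ Λ ∈ C.polys, v ∈ Λ → ∀ x ∈ Λ, g x = f v (x - v)

/-- `γ` is a bounded edge of the complex `C` with endpoints `v ≠ w`. -/
def IsBddEdge {m : ℕ} (C : PolyComplex m) (γ : Set (Fin m → ℝ)) (v w : Fin m → ℝ) : Prop :=
  γ ∈ C.polys ∧ v ≠ w ∧ v ∈ C.vtx ∧ w ∈ C.vtx ∧ γ = segment ℝ v w

/-- The condition that the tuple `(f_v)` lies in the kernel of the map `ρ`: for every
bounded edge `γ` with endpoints `v, w`, the pullbacks of `f_v` and `f_w` to the star of `γ`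
agree (affinely based at the respective vertices). -/
def KerRho {m : ℕ} (C : PolyComplex m)
    (f : (Fin m → ℝ) → ((Fin m → ℝ) → ℝ)) : Prop :=
  ∀ γ v w, IsBddEdge C γ v w → ∀ P ∈ C.polys, γ ⊆ P → ∀ x ∈ P, f v (x - v) = f w (x - w)

/-- `C'` refines (subdivides) `C`. -/
def Refines {m : ℕ} (C' C : PolyComplex m) : Prop :=
  ∀ P' ∈ C'.polys, ∃ P ∈ C.polys, P' ⊆ P

/-- The cone `c(P) ⊆ N_ℝ × ℝ_{≥0}` over a polyhedron `P ⊆ N_ℝ`. -/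
def cPoly {m : ℕ} (P : Set (Fin m → ℝ)) : Set (Fin (m + 1) → ℝ) :=
  closure { z | 0 < z (Fin.last m) ∧ (fun i : Fin m => z i.castSucc / z (Fin.last m)) ∈ P }

/-- A regular SCR polyhedral complex: the cone `c(P)` of every polyhedron is a regular cone. -/
def PolyComplex.IsRegular {m : ℕ} (C : PolyComplex m) : Prop :=
  ∀ P ∈ C.polys, ∃ (b : Module.Basis (Fin (m + 1)) ℤ (Fin (m + 1) → ℤ)) (s : Finset (Fin (m + 1))),
    cPoly P = coneOf (s.image fun j => ι (b j))

/-- The recession cone of a polyhedron. -/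
def recCone {m : ℕ} (P : Set (Fin m → ℝ)) : Set (Fin m → ℝ) :=
  {y | ∀ x ∈ P, ∀ c : ℝ, 0 ≤ c → x + c • y ∈ P}

/-- The recession fan (as a set of cones) of a polyhedral complex. -/
def recSet {m : ℕ} (C : PolyComplex m) : Set (Set (Fin m → ℝ)) :=
  {σ | ∃ P ∈ C.polys, σ = recCone P}

/-- Membership in `R(Σ)`: complete regular SCR polyhedral complexes with recession fan `Σ`. -/
def InRSigma {m : ℕ} (F : Fan m) (C : PolyComplex m) : Prop :=
  C.IsComplete ∧ C.IsRegular ∧ recSet C = F.cones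

/-- Homogeneous piecewise polynomial functions of degree `k` on the fan `c(Π)`. -/
def PPconeHom {m : ℕ} (C : PolyComplex m) (k : ℕ) (f : (Fin (m + 1) → ℝ) → ℝ) : Prop :=
  ∀ P ∈ C.polys, ∃ p : MvPolynomial (Fin (m + 1)) ℚ, p.IsHomogeneous k ∧
    ∀ z ∈ cPoly P, f z = evalR p z

/-- `PP^k_Σ(N_ℝ ⊕ ℝ_{≥0})`: functions that are piecewise polynomial of degree `k`
with respect to `c(Π)` for some `Π ∈ R(Σ)`. -/
def PPSigma {m : ℕ} (F : Fan m) (k : ℕ) (f : (Fin (m + 1) → ℝ) → ℝ) : Prop :=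
  ∃ C : PolyComplex m, InRSigma F C ∧ PPconeHom C k f

/-- The canonical piecewise-linear function attached to the ray through `v` (value `1` at
`v`, vanishing on cones not containing `v`). -/
def IsRayFunGen {m : ℕ} (F : Fan m) (v : Fin m → ℝ) (f : (Fin m → ℝ) → ℝ) : Prop :=
  IsPWLinear F f ∧ PPfun F f ∧ f v = 1 ∧
  ∀ σ ∈ F.cones, v ∉ σ → ∀ x ∈ σ, f x = 0

/-- A family `σ ↦ φ_σ` of canonical piecewise polynomial generators: `φ_σ` is the product
of the ray functions of the rays of the regular cone `σ`. -/
def IsCanonFamily {m : ℕ} (F : Fan m) (Φ : Set (Fin m → ℝ) → ((Fin m → ℝ) → ℝ)) : Prop :=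
  ∀ σ ∈ F.cones, ∃ (b : Module.Basis (Fin m) ℤ (Fin m → ℤ)) (s : Finset (Fin m))
    (rf : Fin m → ((Fin m → ℝ) → ℝ)),
      σ = coneOf (s.image fun j => ι (b j)) ∧
      (∀ j ∈ s, IsRayFunGen F (ι (b j)) (rf j)) ∧
      ∀ x, Φ σ x = ∏ j ∈ s, rf j x

/-- A maximal (full-dimensional) cone of a fan. -/
def IsMaxCone {m : ℕ} (F : Fan m) (σ : Set (Fin m → ℝ)) : Prop :=
  σ ∈ F.cones ∧ Submodule.span ℝ σ = ⊤

/-- `σ` is the minimal cone of `F` containing the set `S`. -/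
def IsMinConeOver {m : ℕ} (F : Fan m) (S σ : Set (Fin m → ℝ)) : Prop :=
  σ ∈ F.cones ∧ S ⊆ σ ∧ ∀ τ ∈ F.cones, S ⊆ τ → σ ⊆ τ

/-- The polynomial `p` represents the function `f` on the cone `σ`. -/
def Represents {m : ℕ} (f : (Fin m → ℝ) → ℝ) (σ : Set (Fin m → ℝ))
    (p : MvPolynomial (Fin m) ℚ) : Prop :=
  ∀ x ∈ σ, f x = evalR p x

/-- Maximal cones of `F'` whose image under `μ` has minimal containing cone `σ` in `F`. -/
def MaxOver {m : ℕ} (F' F : Fan m) (μ : (Fin m → ℝ) ≃ₗ[ℝ] (Fin m → ℝ))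
    (σ : Set (Fin m → ℝ)) : Set (Set (Fin m → ℝ)) :=
  {σ' | IsMaxCone F' σ' ∧ IsMinConeOver F (μ '' σ') σ}

/-- The operator `P` realizes the pushforward formula
`(π_* f)_σ = φ_σ · Σ_{μ(σ')=σ} φ_{σ'}^{-1} f_{σ'}` on maximal cones (with cleared
denominators, as an identity of the unique representing polynomials). -/
def PushFormula {m : ℕ} (F' F : Fan m) (μ : (Fin m → ℝ) ≃ₗ[ℝ] (Fin m → ℝ))
    (Φ' Φ : Set (Fin m → ℝ) → ((Fin m → ℝ) → ℝ))
    (P : ((Fin m → ℝ) → ℝ) → ((Fin m → ℝ) → ℝ)) : Prop :=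
  (∀ f, PPfun F' f → PPfun F (P f)) ∧
  ∀ f, PPfun F' f →
    ∀ q pΦ' : Set (Fin m → ℝ) → MvPolynomial (Fin m) ℚ,
      (∀ σ', IsMaxCone F' σ' → Represents f σ' (q σ') ∧ Represents (Φ' σ') σ' (pΦ' σ')) →
      ∀ σ, IsMaxCone F σ →
        ∀ r pσ : MvPolynomial (Fin m) ℚ, Represents (P f) σ r → Represents (Φ σ) σ pσ →
          ∀ y : Fin m → ℝ,
            evalR r y * ∏ᶠ σ' ∈ MaxOver F' F μ σ, evalR (pΦ' σ') (μ.symm y)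
              = evalR pσ y * ∑ᶠ σ' ∈ MaxOver F' F μ σ,
                  evalR (q σ') (μ.symm y) *
                    ∏ᶠ σ'' ∈ (MaxOver F' F μ σ) \ {σ'}, evalR (pΦ' σ'') (μ.symm y)

/-- The pullback of an affine piecewise polynomial tuple along a refinement `C' → C`. -/
def IsPullbackTuple {m : ℕ} (C C' : PolyComplex m) (k : ℕ)
    (f f' : (Fin m → ℝ) → ((Fin m → ℝ) → ℝ)) : Prop :=
  (∀ v' ∈ C'.vtx, v' ∈ C.vtx → ∀ y, InStar C' v' y → f' v' y = f v' y) ∧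
  (∀ v' ∈ C'.vtx, v' ∉ C.vtx → ∀ Λ ∈ C.polys, FullDim Λ → v' ∈ Λ →
    ∀ v ∈ C.vtx, v ∈ Λ → ∀ p : MvPolynomial (Fin m) ℚ, p.totalDegree ≤ k →
      (∀ y ∈ coneAt v Λ, f v y = evalR p y) →
      ∀ P' ∈ C'.polys, v' ∈ P' → P' ⊆ Λ → ∀ y ∈ coneAt v' P',
        f' v' y = evalR p ((y + v') - v))

/-- The piecewise linear function `φ_{v,γ}` attached at the vertex `v` to the edge `γ`
towards the vertex `w`: linear on the cones of `Π(v)`, vanishing on cones of polyhedra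
not containing `w`, normalized on the ray towards `w`. -/
def IsRayFunAt {m : ℕ} (C : PolyComplex m) (v w : Fin m → ℝ)
    (φ : (Fin m → ℝ) → ℝ) : Prop :=
  (∀ P ∈ C.polys, v ∈ P → ∃ ℓ : (Fin m → ℝ) →ₗ[ℝ] ℝ, ∀ y ∈ coneAt v P, φ y = ℓ y) ∧
  (∀ P ∈ C.polys, v ∈ P → w ∉ P → ∀ y ∈ coneAt v P, φ y = 0) ∧
  (∃ c : ℝ, 0 < c ∧ φ (c • (w - v)) = 1)

/-- `g = -γρ(f)`: the characterization of the composite map `-γρ` in terms of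
representing polynomials, following the explicit formula of the pushforward and pullback
maps: `(-γρ f)_v = Σ_γ (u_{v,γ*} u_{v_γ,γ}^* f_{v_γ} - φ_{v,γ} f_v)`. -/
def IsMinusGammaRho {m : ℕ} (C : PolyComplex m) (k : ℕ)
    (φ : (Fin m → ℝ) → (Fin m → ℝ) → ((Fin m → ℝ) → ℝ))
    (f g : (Fin m → ℝ) → ((Fin m → ℝ) → ℝ)) : Prop :=
  ∀ v ∈ C.vtx, ∀ P ∈ C.polys, FullDim P → v ∈ P →
    ∀ q : (Fin m → ℝ) → MvPolynomial (Fin m) ℚ,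
      (∀ u ∈ C.vtx, u ∈ P →
        (q u).totalDegree ≤ k ∧ ∀ y ∈ coneAt u P, f u y = evalR (q u) y) →
      ∀ y ∈ coneAt v P,
        g v y = ∑ᶠ w ∈ {w | w ∈ C.vtx ∧ w ≠ v ∧ segment ℝ v w ∈ C.polys ∧
                            segment ℝ v w ⊆ P},
          φ v w y * (evalR (q w) ((y + v) - w) - evalR (q v) y)


/-! On a maximal cone `τ` of `Σ` the function `x` is a polynomial `p`, so on every maximal cone
`σ'` of `Σ'` lying over `τ` the product `π^* x · y` is represented by `(p ∘ μ) · y_{σ'}`.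
Clearing denominators in the pushforward formula for `π^* x · y` and for `y` gives
`(r₁ - p r₂) · ∏_{σ'} φ_{σ'} = 0` as polynomial functions, where `r₁`, `r₂` represent
`π_*(π^* x · y)` and `π_* y` on `τ`. Every `φ_{σ'}` is a nonzero polynomial (it takes the
value `1` at the sum of the generators of `σ'`), and the polynomial ring is a domain, so
`r₁ = p r₂`. -/

open MvPolynomial

section EvalR

variable {m : ℕ}

lemma evalR_eq_aeval (p : MvPolynomial (Fin m) ℚ) (x : Fin m → ℝ) :
    evalR p x = aeval x p := by
  rw [evalR, eval_map, aeval_def]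

lemma evalR_mul (p q : MvPolynomial (Fin m) ℚ) (x : Fin m → ℝ) :
    evalR (p * q) x = evalR p x * evalR q x := by
  simp [evalR_eq_aeval]

lemma evalR_sub (p q : MvPolynomial (Fin m) ℚ) (x : Fin m → ℝ) :
    evalR (p - q) x = evalR p x - evalR q x := by
  simp [evalR_eq_aeval]

lemma eq_zero_of_evalR_eq_zero {p : MvPolynomial (Fin m) ℚ} (h : ∀ x, evalR p x = 0) :
    p = 0 := by
  refine map_injective (algebraMap ℚ ℝ) (algebraMap ℚ ℝ).injective (MvPolynomial.funext ?_)
  simpa [evalR] using h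

lemma eq_zero_of_evalR_mul_finprod_eq_zero {ι : Type*} {s : Set ι} (hs : s.Finite)
    {A : MvPolynomial (Fin m) ℚ} {B : ι → MvPolynomial (Fin m) ℚ} (hB : ∀ i ∈ s, B i ≠ 0)
    (h : ∀ x, evalR A x * ∏ᶠ i ∈ s, evalR (B i) x = 0) : A = 0 := by
  lift s to Finset ι using hs
  simp only [finprod_mem_coe_finset] at h
  have hprod : A * ∏ i ∈ s, B i = 0 :=
    eq_zero_of_evalR_eq_zero fun x => by simpa [evalR_eq_aeval] using h x
  exact (mul_eq_zero.mp hprod).resolve_right (Finset.prod_ne_zero_iff.mpr hB)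

end EvalR

section Pullback

variable {m k : ℕ}

lemma exists_linearMap_ι_eq (f : (Fin m → ℤ) →ₗ[ℤ] ℤ) :
    ∃ U : (Fin m → ℝ) →ₗ[ℝ] ℝ, ∀ v, U (ι v) = f v := by
  refine ⟨∑ j, (f (fun i => if j = i then 1 else 0) : ℝ) • LinearMap.proj j, fun v => ?_⟩
  rw [f.pi_apply_eq_sum_univ v]
  simp [ι, mul_comm]

lemma exists_algHom_evalR_comp (μ : (Fin m → ℝ) →ₗ[ℝ] (Fin k → ℝ))
    (hint : ∀ v : Fin m → ℤ, ∃ w : Fin k → ℤ, μ (ι v) = ι w) :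
    ∃ π : MvPolynomial (Fin k) ℚ →ₐ[ℚ] MvPolynomial (Fin m) ℚ,
      ∀ p x, evalR (π p) x = evalR p (μ x) := by
  choose col hcol using fun j : Fin m => hint fun i => if j = i then 1 else 0
  refine ⟨bind₁ fun i => ∑ j, C (col j i : ℚ) * X j, fun p x => ?_⟩
  have hμ : μ x = fun i => ∑ j, (col j i : ℝ) * x j := by
    have hbasis : ∀ j : Fin m, ι (fun i => if j = i then (1 : ℤ) else 0) =
        fun i => if j = i then (1 : ℝ) else 0 := fun j => by
      funext i; simp [ι, apply_ite (fun z : ℤ => (z : ℝ))]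
    funext i
    rw [μ.pi_apply_eq_sum_univ x, Finset.sum_apply]
    refine Finset.sum_congr rfl fun j _ => ?_
    rw [← hbasis, hcol, Pi.smul_apply, smul_eq_mul, ι, mul_comm]
  rw [evalR_eq_aeval, evalR_eq_aeval, aeval_bind₁, hμ]
  congr 2
  funext i
  simp

end Pullback

section PiecewisePolynomial

variable {m : ℕ} {F : Fan m}

lemma PPfun.one : PPfun F fun _ => 1 :=
  fun _ _ => ⟨1, fun x _ => by simp [evalR_eq_aeval]⟩

lemma PPfun.mul {f g : (Fin m → ℝ) → ℝ} (hf : PPfun F f) (hg : PPfun F g) :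
    PPfun F fun x => f x * g x := by
  intro σ hσ
  obtain ⟨p, hp⟩ := hf σ hσ
  obtain ⟨q, hq⟩ := hg σ hσ
  exact ⟨p * q, fun x hx => by rw [evalR_mul, ← hp x hx, ← hq x hx]⟩

lemma PPfun.finset_prod {ι : Type*} (s : Finset ι) {f : ι → (Fin m → ℝ) → ℝ}
    (hf : ∀ i ∈ s, PPfun F (f i)) : PPfun F fun x => ∏ i ∈ s, f i x := by
  classical
  induction s using Finset.induction_on with
  | empty => simpa using PPfun.one
  | insert i s hi ih =>
    simp only [Finset.prod_insert hi]
    exact (hf i (s.mem_insert_self i)).mul (ih fun j hj => hf j (Finset.mem_insert_of_mem hj))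

lemma PPfun.comp_linearMap {k : ℕ} {F' : Fan k} {μ : (Fin k → ℝ) →ₗ[ℝ] (Fin m → ℝ)}
    (hint : ∀ v : Fin k → ℤ, ∃ w : Fin m → ℤ, μ (ι v) = ι w)
    (hmap : ∀ σ' ∈ F'.cones, ∃ σ ∈ F.cones, μ '' σ' ⊆ σ) {f : (Fin m → ℝ) → ℝ}
    (hf : PPfun F f) : PPfun F' fun x => f (μ x) := by
  obtain ⟨π, hπ⟩ := exists_algHom_evalR_comp μ hint
  intro σ' hσ'
  obtain ⟨σ, hσ, hsub⟩ := hmap σ' hσ'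
  obtain ⟨p, hp⟩ := hf σ hσ
  exact ⟨π p, fun x hx => (hp _ (hsub ⟨x, hx, rfl⟩)).trans (hπ p x).symm⟩

lemma exists_represents_family {S : Set (Set (Fin m → ℝ))}
    {f : Set (Fin m → ℝ) → (Fin m → ℝ) → ℝ} (h : ∀ σ ∈ S, ∃ p, Represents (f σ) σ p) :
    ∃ q : Set (Fin m → ℝ) → MvPolynomial (Fin m) ℚ, ∀ σ ∈ S, Represents (f σ) σ (q σ) := by
  classical
  exact ⟨fun σ => if hσ : σ ∈ S then (h σ hσ).choose else 0,
    fun σ hσ => by simpa [hσ] using (h σ hσ).choose_spec⟩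

end PiecewisePolynomial

section Canon

variable {m : ℕ}

lemma mem_coneOf {s : Finset (Fin m → ℝ)} {v : Fin m → ℝ} (hv : v ∈ s) : v ∈ coneOf s := by
  classical
  refine ⟨fun u => if u = v then 1 else 0, fun u => by positivity, ?_⟩
  simp [hv]

lemma ι_injective : Function.Injective (ι (m := m)) := fun v w h =>
  funext fun i => by simpa [ι] using congrFun h i

lemma sum_mem_coneOf_basis (b : Module.Basis (Fin m) ℤ (Fin m → ℤ)) (s : Finset (Fin m)) :
    ∑ j ∈ s, ι (b j) ∈ coneOf (s.image fun j => ι (b j)) := by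
  have hsum : ∑ u ∈ s.image (fun j => ι (b j)), u = ∑ j ∈ s, ι (b j) :=
    Finset.sum_image fun i _ j _ h => b.injective (ι_injective h)
  rw [← hsum]
  exact ⟨fun _ => 1, fun _ => zero_le_one, by simp⟩

lemma exists_dual_coord (b : Module.Basis (Fin m) ℤ (Fin m → ℤ)) (i : Fin m) :
    ∃ U : (Fin m → ℝ) →ₗ[ℝ] ℝ, ∀ j, U (ι (b j)) = if j = i then 1 else 0 := by
  obtain ⟨U, hU⟩ := exists_linearMap_ι_eq (b.coord i)
  exact ⟨U, fun j => by simp [hU, Finsupp.single_apply]⟩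

variable {F : Fan m} {b : Module.Basis (Fin m) ℤ (Fin m → ℤ)} {s : Finset (Fin m)}
  {σ : Set (Fin m → ℝ)} {i : Fin m} {φ : (Fin m → ℝ) → ℝ}

/-- The dual coordinate of `b i` cuts out a face of `σ` containing the other generators but not
`b i` itself. -/
lemma IsRayFunGen.eq_zero_of_ne (hφ : IsRayFunGen F (ι (b i)) φ) (hσF : σ ∈ F.cones)
    (hσ : σ = coneOf (s.image fun j => ι (b j))) {j : Fin m} (hj : j ∈ s) (hji : j ≠ i) :
    φ (ι (b j)) = 0 := by
  obtain ⟨U, hU⟩ := exists_dual_coord b i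
  have hUσ : ∀ x ∈ σ, 0 ≤ U x := by
    rintro x hx
    rw [hσ] at hx
    obtain ⟨c, hc, rfl⟩ := hx
    rw [map_sum]
    refine Finset.sum_nonneg fun u hu => ?_
    obtain ⟨l, -, rfl⟩ := Finset.mem_image.mp hu
    rw [map_smul, hU]
    split_ifs <;> simp [hc]
  have hface : {x ∈ σ | U x = 0} ∈ F.cones := F.face_mem σ hσF _ ⟨U, hUσ, rfl⟩
  refine hφ.2.2.2 _ hface (fun h => by simpa [hU] using h.2) _ ⟨?_, by simp [hU, hji]⟩
  rw [hσ]
  exact mem_coneOf (Finset.mem_image_of_mem _ hj)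

lemma IsRayFunGen.apply_sum_eq_one (hφ : IsRayFunGen F (ι (b i)) φ) (hσF : σ ∈ F.cones)
    (hσ : σ = coneOf (s.image fun j => ι (b j))) (hi : i ∈ s) :
    φ (∑ j ∈ s, ι (b j)) = 1 := by
  obtain ⟨ℓ, hℓ⟩ := hφ.1 σ hσF
  have hgen : ∀ j ∈ s, ι (b j) ∈ σ := fun j hj => hσ ▸ mem_coneOf (Finset.mem_image_of_mem _ hj)
  rw [hℓ _ (hσ ▸ sum_mem_coneOf_basis b s), map_sum,
    Finset.sum_eq_single_of_mem i hi fun j hj hji => by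
      rw [← hℓ _ (hgen j hj), hφ.eq_zero_of_ne hσF hσ hj hji],
    ← hℓ _ (hgen i hi)]
  exact hφ.2.2.1

variable {Φ : Set (Fin m → ℝ) → (Fin m → ℝ) → ℝ}

lemma IsCanonFamily.exists_eq_one (hΦ : IsCanonFamily F Φ) (hσ : σ ∈ F.cones) :
    ∃ v ∈ σ, Φ σ v = 1 := by
  obtain ⟨b, s, rf, hσeq, hrf, hΦσ⟩ := hΦ σ hσ
  refine ⟨_, hσeq ▸ sum_mem_coneOf_basis b s, ?_⟩
  rw [hΦσ]
  exact Finset.prod_eq_one fun i hi => (hrf i hi).apply_sum_eq_one hσ hσeq hi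

lemma IsCanonFamily.exists_represents (hΦ : IsCanonFamily F Φ) (hσ : σ ∈ F.cones) :
    ∃ p, Represents (Φ σ) σ p := by
  obtain ⟨b, s, rf, -, hrf, hΦσ⟩ := hΦ σ hσ
  obtain ⟨p, hp⟩ := PPfun.finset_prod s (fun i hi => (hrf i hi).2.1) σ hσ
  exact ⟨p, fun x hx => by rw [hΦσ]; exact hp x hx⟩

lemma IsCanonFamily.ne_zero_of_represents (hΦ : IsCanonFamily F Φ) (hσ : σ ∈ F.cones)
    {p : MvPolynomial (Fin m) ℚ} (hp : Represents (Φ σ) σ p) : p ≠ 0 := by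
  rintro rfl
  obtain ⟨v, hv, hv1⟩ := hΦ.exists_eq_one hσ
  simp [hp v hv, evalR_eq_aeval] at hv1

end Canon

section Projection

variable {m : ℕ} {F' F : Fan m} {μ : (Fin m → ℝ) ≃ₗ[ℝ] (Fin m → ℝ)}
  {Φ' Φ : Set (Fin m → ℝ) → (Fin m → ℝ) → ℝ} {P : ((Fin m → ℝ) → ℝ) → (Fin m → ℝ) → ℝ}

lemma finite_maxOver (σ : Set (Fin m → ℝ)) : (MaxOver F' F μ σ).Finite :=
  F'.finite.subset fun _ h => h.1.1

lemma PushFormula.evalR_mul_finprod_eq (hP : PushFormula F' F μ Φ' Φ P)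
    {f g : (Fin m → ℝ) → ℝ} (hf : PPfun F' f) (hg : PPfun F' g)
    {qf qg pΦ' : Set (Fin m → ℝ) → MvPolynomial (Fin m) ℚ}
    (hqf : ∀ σ', IsMaxCone F' σ' → Represents f σ' (qf σ'))
    (hqg : ∀ σ', IsMaxCone F' σ' → Represents g σ' (qg σ'))
    (hpΦ' : ∀ σ', IsMaxCone F' σ' → Represents (Φ' σ') σ' (pΦ' σ'))
    {σ : Set (Fin m → ℝ)} (hσ : IsMaxCone F σ) {rf rg pσ a : MvPolynomial (Fin m) ℚ}
    (hrf : Represents (P f) σ rf) (hrg : Represents (P g) σ rg) (hpσ : Represents (Φ σ) σ pσ)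
    (hqfg : ∀ σ' ∈ MaxOver F' F μ σ, ∀ x, evalR (qf σ') x = evalR a (μ x) * evalR (qg σ') x)
    (y : Fin m → ℝ) :
    evalR rf y * ∏ᶠ σ' ∈ MaxOver F' F μ σ, evalR (pΦ' σ') (μ.symm y) =
      evalR a y * (evalR rg y * ∏ᶠ σ' ∈ MaxOver F' F μ σ, evalR (pΦ' σ') (μ.symm y)) := by
  rw [hP.2 f hf qf pΦ' (fun σ' h => ⟨hqf σ' h, hpΦ' σ' h⟩) σ hσ rf pσ hrf hpσ y,
    hP.2 g hg qg pΦ' (fun σ' h => ⟨hqg σ' h, hpΦ' σ' h⟩) σ hσ rg pσ hrg hpσ y,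
    mul_left_comm (evalR a y), mul_finsum_mem _ (evalR a y)]
  congr 1
  refine finsum_mem_congr rfl fun σ' hσ' => ?_
  rw [hqfg σ' hσ', μ.apply_symm_apply, mul_assoc]

lemma exists_represents_comp_mul {x y : (Fin m → ℝ) → ℝ}
    (hxy : PPfun F' fun v => x (μ v) * y v) {π : MvPolynomial (Fin m) ℚ →ₐ[ℚ] MvPolynomial (Fin m) ℚ}
    (hπ : ∀ p v, evalR (π p) v = evalR p (μ v)) {τ : Set (Fin m → ℝ)} {pX : MvPolynomial (Fin m) ℚ}
    (hpX : Represents x τ pX) {qy : Set (Fin m → ℝ) → MvPolynomial (Fin m) ℚ}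
    (hqy : ∀ σ' ∈ F'.cones, Represents y σ' (qy σ')) :
    ∃ q : Set (Fin m → ℝ) → MvPolynomial (Fin m) ℚ,
      (∀ σ', IsMaxCone F' σ' → Represents (fun v => x (μ v) * y v) σ' (q σ')) ∧
      ∀ σ' ∈ MaxOver F' F μ τ, q σ' = π pX * qy σ' := by
  classical
  obtain ⟨qxy, hqxy⟩ := exists_represents_family (f := fun _ v => x (μ v) * y v) hxy
  refine ⟨fun σ' => if σ' ∈ MaxOver F' F μ τ then π pX * qy σ' else qxy σ',
    fun σ' hσ' v hv => ?_, fun σ' h => if_pos h⟩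
  dsimp only
  by_cases hover : σ' ∈ MaxOver F' F μ τ
  · rw [if_pos hover, evalR_mul, hπ, ← hqy σ' hσ'.1 v hv, ← hpX _ (hover.2.2.1 ⟨v, hv, rfl⟩)]
  · rw [if_neg hover]
    exact hqxy σ' hσ'.1 v hv

theorem PushFormula.apply_comp_mul_of_isMaxCone (hP : PushFormula F' F μ Φ' Φ P)
    (hΦ' : IsCanonFamily F' Φ') (hΦ : IsCanonFamily F Φ)
    (hint : ∀ v : Fin m → ℤ, ∃ w : Fin m → ℤ, μ (ι v) = ι w)
    (hmap : ∀ σ' ∈ F'.cones, ∃ σ ∈ F.cones, μ '' σ' ⊆ σ)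
    {x y : (Fin m → ℝ) → ℝ} (hx : PPfun F x) (hy : PPfun F' y)
    {τ : Set (Fin m → ℝ)} (hτ : IsMaxCone F τ) {z : Fin m → ℝ} (hz : z ∈ τ) :
    P (fun v => x (μ v) * y v) z = x z * P y z := by
  obtain ⟨π, hπ⟩ := exists_algHom_evalR_comp μ.toLinearMap hint
  simp only [LinearEquiv.coe_coe] at hπ
  have hxy : PPfun F' fun v => x (μ v) * y v :=
    (hx.comp_linearMap (μ := μ.toLinearMap) hint hmap).mul hy
  obtain ⟨pX, hpX⟩ := hx τ hτ.1
  obtain ⟨qy, hqy⟩ := exists_represents_family (f := fun _ => y) hy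
  obtain ⟨q, hq, hq_over⟩ := exists_represents_comp_mul hxy hπ hpX hqy
  obtain ⟨pΦ', hpΦ'⟩ := exists_represents_family fun σ' (hσ' : σ' ∈ F'.cones) =>
    hΦ'.exists_represents hσ'
  obtain ⟨r1, hr1⟩ := hP.1 _ hxy τ hτ.1
  obtain ⟨r2, hr2⟩ := hP.1 y hy τ hτ.1
  obtain ⟨pτ, hpτ⟩ := hΦ.exists_represents hτ.1
  have key := hP.evalR_mul_finprod_eq hxy hy hq (fun σ' h => hqy σ' h.1)
    (fun σ' h => hpΦ' σ' h.1) hτ hr1 hr2 hpτ (a := pX)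
    fun σ' hσ' v => by rw [hq_over σ' hσ', evalR_mul, hπ]
  have hzero : π (r1 - pX * r2) = 0 :=
    eq_zero_of_evalR_mul_finprod_eq_zero (finite_maxOver τ)
      (fun σ' h => hΦ'.ne_zero_of_represents h.1.1 (hpΦ' σ' h.1.1)) fun v => by
        have hv := key (μ v)
        rw [μ.symm_apply_apply] at hv
        rw [hπ, evalR_sub, evalR_mul]
        linear_combination hv
  have hz' : evalR (π (r1 - pX * r2)) (μ.symm z) = 0 := by simp [hzero, evalR_eq_aeval]
  rw [hπ, evalR_sub, evalR_mul, μ.apply_symm_apply] at hz'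
  rw [hr1 z hz, hr2 z hz, hpX z hz]
  linear_combination hz'

end Projection

theorem stmt9_general {n : ℕ} (F' F : Fan n) (μ : (Fin n → ℝ) ≃ₗ[ℝ] (Fin n → ℝ))
    (hint : ∀ v : Fin n → ℤ, ∃ w : Fin n → ℤ, μ (ι v) = ι w)
    (hmap : ∀ σ' ∈ F'.cones, ∃ σ ∈ F.cones, μ '' σ' ⊆ σ)
    (hpure : ∀ σ ∈ F.cones, ∃ τ, IsMaxCone F τ ∧ σ ⊆ τ)
    (Φ' Φ : Set (Fin n → ℝ) → ((Fin n → ℝ) → ℝ))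
    (hΦ' : IsCanonFamily F' Φ') (hΦ : IsCanonFamily F Φ)
    (P : ((Fin n → ℝ) → ℝ) → ((Fin n → ℝ) → ℝ))
    (hP : PushFormula F' F μ Φ' Φ P) :
    ∀ x y : (Fin n → ℝ) → ℝ, PPfun F x → PPfun F' y → ∀ z ∈ F.supp,
      P (fun v => x (μ v) * y v) z = x z * P y z ∧
      P (fun v => x (μ v)) z = x z * P (fun _ => 1) z := by
  intro x y hx hy z ⟨σ, hσ, hzσ⟩
  obtain ⟨τ, hτ, hστ⟩ := hpure σ hσ
  have hproj {y'} (hy' : PPfun F' y') :=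
    hP.apply_comp_mul_of_isMaxCone hΦ' hΦ hint hmap hx hy' hτ (hστ hzσ)
  exact ⟨hproj hy, by simpa using hproj PPfun.one⟩

/-- Projection formula: for a proper morphism of regular fans with all
maximal cones of equal (full) dimension, the pushforward `π_*` (characterized by the
formula `(π_* f)_σ = φ_σ Σ_{μ(σ')=σ} φ_{σ'}^{-1} f_{σ'}`) and the pullback
`π^* x = x ∘ μ` satisfy `π_*(π^*(x) · y) = x · π_*(y)`; in particular
`π_*(π^*(x)) = x · π_*(1)`. -/
theorem stmt9 {n : ℕ} (F' F : Fan n) (μ : (Fin n → ℝ) ≃ₗ[ℝ] (Fin n → ℝ))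
    (hint : ∀ v : Fin n → ℤ, ∃ w : Fin n → ℤ, μ (ι v) = ι w)
    (hmap : ∀ σ' ∈ F'.cones, ∃ σ ∈ F.cones, μ '' σ' ⊆ σ)
    (hproper : μ ⁻¹' F.supp = F'.supp)
    (hreg : F.IsRegular) (hreg' : F'.IsRegular)
    (hpure : ∀ σ ∈ F.cones, ∃ τ, IsMaxCone F τ ∧ σ ⊆ τ)
    (hpure' : ∀ σ' ∈ F'.cones, ∃ τ', IsMaxCone F' τ' ∧ σ' ⊆ τ')
    (Φ' Φ : Set (Fin n → ℝ) → ((Fin n → ℝ) → ℝ))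
    (hΦ' : IsCanonFamily F' Φ') (hΦ : IsCanonFamily F Φ)
    (P : ((Fin n → ℝ) → ℝ) → ((Fin n → ℝ) → ℝ))
    (hP : PushFormula F' F μ Φ' Φ P) :
    ∀ x y : (Fin n → ℝ) → ℝ, PPfun F x → PPfun F' y → ∀ z ∈ F.supp,
      P (fun v => x (μ v) * y v) z = x z * P y z ∧
      P (fun v => x (μ v)) z = x z * P (fun _ => 1) z :=
  stmt9_general F' F μ hint hmap hpure Φ' Φ hΦ' hΦ P hP

end PPArakelov
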